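/- arXiv:1608.08285 — 2 statements merged into one kernel-verified Lean document; each statement's English description precedes it below -/
import Mathlib

section
/- For any Q, W ∈ St_{m,ℓ}, the matrix (1/4)I_ℓ − φ_Q(W)ᵀ φ_Q(W) is positive semidefinite, where φ_Q(W) = (I_m − Q Qᵀ) W Wᵀ Q. Equivalently, ‖φ_Q(W) v‖ ≤ ‖v‖/2 for all v ∈ ℝ^ℓ. -/
/-!
Write `P = Qᵀ W Wᵀ Q`. Since `1 - Q Qᵀ` is a symmetric idempotent and `Wᵀ W = 1`,
`φ_Q(W)ᵀ φ_Q(W) = P - P²`, so `¼ I - φ_Q(W)ᵀ φ_Q(W) = (P - ½ I)²`, the square of a symmetric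
matrix.
-/

open Matrix

section Isometry

variable {R : Type*} [CommRing R] {m n : Type*} [Fintype m] [Fintype n] [DecidableEq m]
  [DecidableEq n]

theorem transpose_mul_self_one_sub_mul_transpose {Q : Matrix m n R} (hQ : Qᵀ * Q = 1) :
    (1 - Q * Qᵀ)ᵀ * (1 - Q * Qᵀ) = 1 - Q * Qᵀ := by
  have hidem : Q * Qᵀ * (Q * Qᵀ) = Q * Qᵀ := by
    rw [Matrix.mul_assoc, ← Matrix.mul_assoc Qᵀ, hQ, Matrix.one_mul]
  simp only [transpose_sub, transpose_one, transpose_mul, transpose_transpose, Matrix.sub_mul,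
    Matrix.mul_sub, Matrix.one_mul, Matrix.mul_one, hidem]
  abel

theorem transpose_mul_self_eq_sub_mul_self_of_isometry {Q W : Matrix m n R} (hQ : Qᵀ * Q = 1)
    (hW : Wᵀ * W = 1) :
    ((1 - Q * Qᵀ) * W * Wᵀ * Q)ᵀ * ((1 - Q * Qᵀ) * W * Wᵀ * Q) =
      Qᵀ * W * Wᵀ * Q - Qᵀ * W * Wᵀ * Q * (Qᵀ * W * Wᵀ * Q) := by
  calc ((1 - Q * Qᵀ) * W * Wᵀ * Q)ᵀ * ((1 - Q * Qᵀ) * W * Wᵀ * Q)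
      = Qᵀ * W * Wᵀ * ((1 - Q * Qᵀ)ᵀ * (1 - Q * Qᵀ)) * (W * Wᵀ * Q) := by
        simp only [transpose_mul, transpose_transpose, Matrix.mul_assoc]
    _ = Qᵀ * W * (Wᵀ * W) * Wᵀ * Q - Qᵀ * W * Wᵀ * Q * (Qᵀ * W * Wᵀ * Q) := by
        rw [transpose_mul_self_one_sub_mul_transpose hQ]
        simp only [Matrix.mul_sub, Matrix.sub_mul, Matrix.mul_one, Matrix.mul_assoc]
    _ = _ := by rw [hW, Matrix.mul_one]

end Isometry

theorem quarter_smul_one_sub_sub_mul_self {K A : Type*} [Field K] [NeZero (2 : K)] [Ring A]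
    [Algebra K A] (p : A) :
    (1 / 4 : K) • (1 : A) - (p - p * p) = (p - (1 / 2 : K) • 1) * (p - (1 / 2 : K) • 1) := by
  set a : A := (1 / 2 : K) • 1
  have haa : a * a = (1 / 4 : K) • 1 := by
    rw [smul_mul_smul, one_mul, one_div_mul_one_div]; norm_num
  have hp : p * a + a * p = p := by
    rw [mul_smul_one, smul_one_mul, ← add_smul, add_halves, one_smul]
  calc (1 / 4 : K) • (1 : A) - (p - p * p) = p * p - (p * a + a * p) + a * a := by
        rw [hp, haa]; abel
    _ = (p - a) * (p - a) := by noncomm_ring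

theorem star_mulVec_dotProduct_mulVec_le_of_posSemidef {R n m : Type*} [CommRing R]
    [PartialOrder R] [IsOrderedAddMonoid R] [StarRing R] [Fintype m] [Fintype n] [DecidableEq n]
    {A : Matrix m n R} {c : R} (hA : (c • 1 - Aᴴ * A).PosSemidef) (v : n → R) :
    star (A *ᵥ v) ⬝ᵥ (A *ᵥ v) ≤ c * (star v ⬝ᵥ v) := by
  have h := hA.dotProduct_mulVec_nonneg v
  rwa [sub_mulVec, smul_mulVec, one_mulVec, ← mulVec_mulVec, dotProduct_sub, dotProduct_smul,
    smul_eq_mul, dotProduct_mulVec, ← star_mulVec, sub_nonneg] at h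

/-- `(1/4)I − φ_Q(W)ᵀ φ_Q(W)` is positive semidefinite; equivalently
`‖φ_Q(W) v‖² ≤ ‖v‖²/4` for all `v`. -/
theorem stmt6 {m ℓ : ℕ} (Q W : Matrix (Fin m) (Fin ℓ) ℝ)
    (hQ : Qᵀ * Q = 1) (hW : Wᵀ * W = 1) :
    ((1 / 4 : ℝ) • (1 : Matrix (Fin ℓ) (Fin ℓ) ℝ)
        - ((1 - Q * Qᵀ) * W * Wᵀ * Q)ᵀ * ((1 - Q * Qᵀ) * W * Wᵀ * Q)).PosSemidef ∧
    ∀ v : Fin ℓ → ℝ,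
      (((1 - Q * Qᵀ) * W * Wᵀ * Q) *ᵥ v) ⬝ᵥ (((1 - Q * Qᵀ) * W * Wᵀ * Q) *ᵥ v)
        ≤ (v ⬝ᵥ v) / 4 := by
  have hsymm : (Qᵀ * W * Wᵀ * Q - (1 / 2 : ℝ) • 1)ᴴ = Qᵀ * W * Wᵀ * Q - (1 / 2 : ℝ) • 1 := by
    simp [conjTranspose_eq_transpose_of_trivial, Matrix.mul_assoc]
  have hpsd : ((1 / 4 : ℝ) • (1 : Matrix (Fin ℓ) (Fin ℓ) ℝ)
      - ((1 - Q * Qᵀ) * W * Wᵀ * Q)ᵀ * ((1 - Q * Qᵀ) * W * Wᵀ * Q)).PosSemidef := by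
    rw [transpose_mul_self_eq_sub_mul_self_of_isometry hQ hW, quarter_smul_one_sub_sub_mul_self]
    have h := posSemidef_conjTranspose_mul_self (Qᵀ * W * Wᵀ * Q - (1 / 2 : ℝ) • 1)
    rw [hsymm] at h
    exact h
  refine ⟨hpsd, fun v => ?_⟩
  rw [← conjTranspose_eq_transpose_of_trivial] at hpsd
  have := star_mulVec_dotProduct_mulVec_le_of_posSemidef hpsd v
  rw [star_trivial, star_trivial] at this
  linarith
end

section
/- Let Λ = diag(λ_1,...,λ_m) with λ_1 ≥ ... ≥ λ_m ≥ 0 and strict gap λ_ℓ > λ_{ℓ+1}. Then among all rank-ℓ orthogonal projection matrices P (symmetric, P² = P, tr P = ℓ), the Frobenius distance ‖Λ − P‖_F is uniquely minimized by P = diag(I_ℓ, 0). -/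
/-!
Since `P` is a symmetric idempotent, `‖Λ - P‖_F² = ‖Λ‖_F² + tr P - 2 ∑ λᵢ Pᵢᵢ`, so with `tr P = ℓ`
fixed the problem is to maximise the linear form `∑ λᵢ Pᵢᵢ`. The diagonal of `P` satisfies
`0 ≤ Pᵢᵢ ≤ 1` and `∑ Pᵢᵢ = ℓ`, and over such weights a linear form is maximised exactly at the
indicator of its `ℓ` largest coefficients: for any `c` strictly separating them from the others,
`∑ λᵢ (qᵢ - dᵢ) = ∑ (λᵢ - c)(qᵢ - dᵢ)` is a sum of nonnegative terms that vanish only when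
`dᵢ = qᵢ`. Finally a symmetric idempotent with `0`/`1` diagonal is diagonal, since
`Pᵢᵢ = ∑ⱼ Pᵢⱼ²`.
-/

open Matrix Finset

namespace Matrix

variable {n R : Type*} [Fintype n]

section CommRing

variable [CommRing R] {P : Matrix n n R}

theorem diag_eq_sum_sq_of_symm_idempotent (hsym : Pᵀ = P) (hidem : P * P = P) (i : n) :
    P i i = ∑ j, P i j ^ 2 := by
  conv_lhs => rw [← hidem, mul_apply]
  refine sum_congr rfl fun j _ => ?_
  rw [sq, ← transpose_apply P j i, hsym]

theorem trace_transpose_mul_diagonal_sub_of_symm_idempotent [DecidableEq n] (w : n → R)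
    (hsym : Pᵀ = P) (hidem : P * P = P) :
    trace ((diagonal w - P)ᵀ * (diagonal w - P))
      = ∑ i, w i ^ 2 + trace P - 2 * ∑ i, w i * P i i := by
  rw [transpose_sub, diagonal_transpose, hsym, sub_mul, mul_sub, mul_sub, hidem,
    trace_sub, trace_sub, trace_sub, trace_mul_comm P, diagonal_mul_diagonal, trace_diagonal]
  simp only [trace, diag_apply, diagonal_mul, sq]
  ring

end CommRing

section Ordered

variable [CommRing R] [LinearOrder R] [IsStrictOrderedRing R] {P : Matrix n n R}

theorem diag_nonneg_of_symm_idempotent (hsym : Pᵀ = P) (hidem : P * P = P) (i : n) :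
    0 ≤ P i i := by
  rw [diag_eq_sum_sq_of_symm_idempotent hsym hidem i]
  exact sum_nonneg fun j _ => sq_nonneg _

theorem diag_le_one_of_symm_idempotent (hsym : Pᵀ = P) (hidem : P * P = P) (i : n) :
    P i i ≤ 1 := by
  have hsq : P i i ^ 2 ≤ P i i := by
    conv_rhs => rw [diag_eq_sum_sq_of_symm_idempotent hsym hidem i]
    exact single_le_sum (fun j _ => sq_nonneg (P i j)) (mem_univ i)
  nlinarith [diag_nonneg_of_symm_idempotent hsym hidem i]

theorem eq_diagonal_of_symm_idempotent [DecidableEq n] (hsym : Pᵀ = P) (hidem : P * P = P)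
    (hdiag : ∀ i, P i i ^ 2 = P i i) : P = diagonal P.diag := by
  ext i j
  rcases eq_or_ne i j with rfl | hij
  · simp
  have hoff : ∑ k ∈ univ.erase i, P i k ^ 2 = 0 := by
    rw [sum_erase_eq_sub (mem_univ i), ← diag_eq_sum_sq_of_symm_idempotent hsym hidem, hdiag,
      sub_self]
  have hj : P i j ^ 2 = 0 :=
    (sum_eq_zero_iff_of_nonneg fun k _ => sq_nonneg (P i k)).mp hoff j
      (mem_erase.mpr ⟨hij.symm, mem_univ j⟩)
  rw [diagonal_apply_ne _ hij, pow_eq_zero_iff two_ne_zero |>.mp hj]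

end Ordered

end Matrix

section Weights

variable {ι R : Type*} [Fintype ι] [Field R] [LinearOrder R] [IsStrictOrderedRing R]

theorem sum_mul_le_sum_mul_indicator_of_gap (p : ι → Prop) [DecidablePred p] {w d : ι → R}
    (hgap : ∀ i j, p i → ¬ p j → w j < w i) (hd0 : ∀ i, 0 ≤ d i) (hd1 : ∀ i, d i ≤ 1)
    (hsum : ∑ i, d i = #{i | p i}) :
    ∑ i, w i * d i ≤ ∑ i, w i * (if p i then 1 else 0) ∧
      (∑ i, w i * d i = ∑ i, w i * (if p i then 1 else 0) →
        d = fun i => if p i then 1 else 0) := by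
  set q : ι → R := fun i => if p i then 1 else 0
  have hsep : ∀ x ∈ ({i | ¬ p i} : Finset ι).image w, ∀ y ∈ ({i | p i} : Finset ι).image w,
      x < y := by
    simp only [mem_image, mem_filter, mem_univ, true_and]
    rintro _ ⟨j, hj, rfl⟩ _ ⟨i, hi, rfl⟩
    exact hgap i j hi hj
  obtain ⟨c, hcout, hcin⟩ := Finset.exists_between' _ _ hsep
  have hw_ne : ∀ i, w i ≠ c := fun i => by
    by_cases hi : p i
    · exact (hcin _ (mem_image_of_mem w (by simpa using hi))).ne'
    · exact (hcout _ (mem_image_of_mem w (by simpa using hi))).ne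
  have hterm : ∀ i, 0 ≤ (w i - c) * (q i - d i) := fun i => by
    by_cases hi : p i
    · have := hcin _ (mem_image_of_mem w (by simpa using hi))
      simp only [q, if_pos hi]
      exact mul_nonneg (by linarith) (by linarith [hd1 i])
    · have := hcout _ (mem_image_of_mem w (by simpa using hi))
      simp only [q, if_neg hi]
      exact mul_nonneg_of_nonpos_of_nonpos (by linarith) (by linarith [hd0 i])
  -- `∑ qᵢ = ∑ dᵢ`, so subtracting `c` from every weight does not change the difference
  have hdiff : ∑ i, w i * q i - ∑ i, w i * d i = ∑ i, (w i - c) * (q i - d i) := by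
    have hq : ∑ i, q i = #{i | p i} := by simp [q, sum_boole]
    simp only [sub_mul, mul_sub, sum_sub_distrib, ← mul_sum, hq, hsum]
    ring
  refine ⟨sub_nonneg.mp (hdiff ▸ sum_nonneg fun i _ => hterm i), fun heq => funext fun i => ?_⟩
  have hzero : (w i - c) * (q i - d i) = 0 :=
    (sum_eq_zero_iff_of_nonneg fun i _ => hterm i).mp (by rw [← hdiff, heq, sub_self]) i
      (mem_univ i)
  exact (sub_eq_zero.mp ((mul_eq_zero.mp hzero).resolve_left (sub_ne_zero.mpr (hw_ne i)))).symm

end Weights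

theorem stmt14_general {m ℓ : ℕ} (hℓ : ℓ ≤ m) (lam : Fin m → ℝ)
    (hgap : ∀ i j : Fin m, (i : ℕ) < ℓ → ℓ ≤ (j : ℕ) → lam j < lam i)
    (P0 : Matrix (Fin m) (Fin m) ℝ)
    (hP0 : P0 = Matrix.diagonal fun i : Fin m => if (i : ℕ) < ℓ then (1 : ℝ) else 0) :
    (P0ᵀ = P0 ∧ P0 * P0 = P0 ∧ trace P0 = (ℓ : ℝ)) ∧
    ∀ P : Matrix (Fin m) (Fin m) ℝ, Pᵀ = P → P * P = P → trace P = (ℓ : ℝ) →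
      (trace ((diagonal lam - P0)ᵀ * (diagonal lam - P0))
          ≤ trace ((diagonal lam - P)ᵀ * (diagonal lam - P)) ∧
       (trace ((diagonal lam - P)ᵀ * (diagonal lam - P))
          = trace ((diagonal lam - P0)ᵀ * (diagonal lam - P0)) → P = P0)) := by
  subst hP0
  set q : Fin m → ℝ := fun i => if (i : ℕ) < ℓ then 1 else 0
  have hcard : (#{i : Fin m | (i : ℕ) < ℓ} : ℝ) = ℓ := by
    rw [Fin.card_filter_val_lt, min_eq_right hℓ]
  have hsym0 : (diagonal q)ᵀ = diagonal q := diagonal_transpose q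
  have hidem0 : diagonal q * diagonal q = diagonal q := by
    rw [diagonal_mul_diagonal]; congr 1; funext i; simp [q]
  have htr0 : trace (diagonal q) = ℓ := by rw [trace_diagonal, ← hcard]; simp [q, sum_boole]
  refine ⟨⟨hsym0, hidem0, htr0⟩, fun P hsym hidem htr => ?_⟩
  obtain ⟨hle, hcase⟩ := sum_mul_le_sum_mul_indicator_of_gap (fun i : Fin m => (i : ℕ) < ℓ)
    (d := fun i => P i i) (fun i j hi hj => hgap i j hi (not_lt.mp hj))
    (diag_nonneg_of_symm_idempotent hsym hidem) (diag_le_one_of_symm_idempotent hsym hidem)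
    (htr.trans hcard.symm)
  simp only [trace_transpose_mul_diagonal_sub_of_symm_idempotent lam hsym hidem,
    trace_transpose_mul_diagonal_sub_of_symm_idempotent lam hsym0 hidem0, htr, htr0,
    diagonal_apply_eq]
  refine ⟨by linarith, fun heq => ?_⟩
  have hdiag : P.diag = q := hcase (by linarith)
  have hdiag01 : ∀ i, P i i ^ 2 = P i i := fun i => by
    rw [← diag_apply P, hdiag]
    by_cases hi : (i : ℕ) < ℓ <;> simp [q, hi]
  rw [eq_diagonal_of_symm_idempotent hsym hidem hdiag01, hdiag]

/-- Among rank-`ℓ` orthogonal projections, `‖Λ − P‖_F` is uniquely minimized by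
`P = diag(I_ℓ, 0)` when the diagonal of `Λ` is decreasing with a strict gap at `ℓ`. -/
theorem stmt14 {m ℓ : ℕ} (hℓ : ℓ ≤ m) (lam : Fin m → ℝ)
    (hanti : ∀ i j : Fin m, i ≤ j → lam j ≤ lam i)
    (hnn : ∀ i, 0 ≤ lam i)
    (hgap : ∀ i j : Fin m, (i : ℕ) < ℓ → ℓ ≤ (j : ℕ) → lam j < lam i)
    (P0 : Matrix (Fin m) (Fin m) ℝ)
    (hP0 : P0 = Matrix.diagonal fun i : Fin m => if (i : ℕ) < ℓ then (1 : ℝ) else 0) :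
    (P0ᵀ = P0 ∧ P0 * P0 = P0 ∧ trace P0 = (ℓ : ℝ)) ∧
    ∀ P : Matrix (Fin m) (Fin m) ℝ, Pᵀ = P → P * P = P → trace P = (ℓ : ℝ) →
      (trace ((diagonal lam - P0)ᵀ * (diagonal lam - P0))
          ≤ trace ((diagonal lam - P)ᵀ * (diagonal lam - P)) ∧
       (trace ((diagonal lam - P)ᵀ * (diagonal lam - P))
          = trace ((diagonal lam - P0)ᵀ * (diagonal lam - P0)) → P = P0)) :=
  stmt14_general hℓ lam hgap P0 hP0
end
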